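/- Run OpConEx for T ≥ 1 iterations with step sizes satisfying condition (C). Then: (i) for every x ∈ X̃, Γ_T·⟨F(x), x̄^T − x⟩ ≤ (γ₀η₀/2)‖x − x⁰‖² + M_T(0); and (ii) Γ_T·‖[g(x̄^T)]_+‖ ≤ (γ₀η₀/2)‖x* − x⁰‖² + (γ₀τ₀/2)(‖λ*‖+1)² + M_T(‖λ*‖+1). -/

import Mathlib

open scoped InnerProductSpace BigOperators

noncomputable section

/-- ℝ^k with the Euclidean norm. -/
abbrev Euc (k : ℕ) := EuclideanSpace ℝ (Fin k)

/-- `∇g(x)ᵀ d`, where `G j` is the j-th column of `∇g(x)`. -/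
def gradT {m : ℕ} {E : Type*} [NormedAddCommGroup E] [InnerProductSpace ℝ E]
    (G : Fin m → E) (d : E) : Euc m :=
  (EuclideanSpace.equiv (Fin m) ℝ).symm fun j => ⟪G j, d⟫_ℝ

/-- `∇g(x) μ`, where `G j` is the j-th column of `∇g(x)`. -/
def gradMul {m : ℕ} {E : Type*} [NormedAddCommGroup E] [InnerProductSpace ℝ E]
    (G : Fin m → E) (μ : Euc m) : E :=
  ∑ j, μ j • G j

/-- componentwise positive part `[v]₊`. -/
def posPart {m : ℕ} (v : Euc m) : Euc m :=
  (EuclideanSpace.equiv (Fin m) ℝ).symm fun j => max (v j) 0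

/-- The quantity `M_T(a)` from Lemma 2.2 (OpConEx working bound). -/
def opconexMT {n m : ℕ} (γ η τ θ : ℕ → ℝ) (Lg Hg : ℝ)
    (F : Euc n → Euc n) (x xm : ℕ → Euc n) (lam : ℕ → Euc m)
    (ell ellm : ℕ → Euc m) (T : ℕ) (a : ℝ) : ℝ :=
  (∑ t ∈ Finset.range T,
      (γ t * θ t * ⟪F (x t) - F (xm t), x t - x (t + 1)⟫_ℝ
        + γ t * θ t * ⟪ell t - ellm t, lam (t + 1) - lam t⟫_ℝ
        - γ t * (η t - Lg * a) / 2 * ‖x (t + 1) - x t‖ ^ 2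
        - γ t * τ t / 2 * ‖lam t - lam (t + 1)‖ ^ 2
        + a * Hg * γ t * ‖x (t + 1) - x t‖))
    + γ (T - 1) / (2 * η (T - 1)) * ‖F (x T) - F (xm T)‖ ^ 2
    + γ (T - 1) / (2 * τ (T - 1)) * ‖ell T - ellm T‖ ^ 2


/-! Each OpConEx iteration consists of two prox steps. Their three-point inequalities, together
with the subgradient inequality for the linearized constraints, bound the Lagrangian gap
`⟪F (x^{t+1}), x^{t+1} - z⟫ + ⟪l, ℓ_g(x^{t+1})⟫ - ⟪λ^{t+1}, g z⟫` by the increment of the coupling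
term `⟪ΔF_t, x^t - z⟫ + ⟪l - λ^t, q_t⟫` plus a summand of `M_T(0)`. Under (C) the weighted sum
telescopes, and Young's inequality absorbs the last coupling term. Monotonicity of `F` and
feasibility of `z` then give (i) with `l = 0`. For (ii) take `z = x*` and `l` the multiple of
`[g(x̄)]₊` of norm `a = ‖λ*‖ + 1`: the subgradient inequality at `x̄` moves the average inside `g`,
the saddle point costs at most `‖λ*‖ ‖[g(x̄)]₊‖`, and trading `ℓ_g` for `g` costs the smoothness
error, which is `M_T(a) - M_T(0)`. -/

open Finset

section Prox

variable {E : Type*} [NormedAddCommGroup E] [InnerProductSpace ℝ E]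

theorem inner_sub_le_of_prox_min {S : Set E} (hS : Convex ℝ S) {c w u : E} {β : ℝ} (hu : u ∈ S)
    (hmin : ∀ y ∈ S, ⟪c, u⟫_ℝ + β / 2 * ‖u - w‖ ^ 2 ≤ ⟪c, y⟫_ℝ + β / 2 * ‖y - w‖ ^ 2)
    {y : E} (hy : y ∈ S) :
    ⟪c, u - y⟫_ℝ ≤ β / 2 * (‖y - w‖ ^ 2 - ‖u - w‖ ^ 2 - ‖y - u‖ ^ 2) := by
  have hderiv : HasFDerivAt (fun v => ⟪c, v⟫_ℝ + β / 2 * ‖v - w‖ ^ 2)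
      (innerSL ℝ c + (β / 2) • (2 • (innerSL ℝ (u - w)).comp (ContinuousLinearMap.id ℝ E))) u :=
    ((innerSL ℝ c).hasFDerivAt).add
      ((((hasFDerivAt_id u).sub_const w).norm_sq).const_mul (β / 2))
  have hoptimal : 0 ≤ ⟪c, y - u⟫_ℝ + β * ⟪u - w, y - u⟫_ℝ := by
    have hloc : IsLocalMinOn (fun v => ⟪c, v⟫_ℝ + β / 2 * ‖v - w‖ ^ 2) S u :=
      IsMinOn.localize fun v hv => hmin v hv
    have := hloc.hasFDerivWithinAt_nonneg hderiv.hasFDerivWithinAt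
      (sub_mem_posTangentConeAt_of_segment_subset (hS.segment_subset hu hy))
    simp only [add_apply, smul_apply, innerSL_apply_apply, smul_eq_mul, Nat.cast_ofNat,
      ContinuousLinearMap.comp_id, nsmul_eq_mul] at this
    linarith
  have hexpand : ‖y - w‖ ^ 2 = ‖u - w‖ ^ 2 + 2 * ⟪u - w, y - u⟫_ℝ + ‖y - u‖ ^ 2 := by
    rw [← norm_add_sq_real, sub_add_sub_cancel']
  have hthree : β / 2 * (‖y - w‖ ^ 2 - ‖u - w‖ ^ 2 - ‖y - u‖ ^ 2) = β * ⟪u - w, y - u⟫_ℝ := by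
    rw [hexpand]; ring
  rw [hthree, ← neg_sub y u, inner_neg_right]
  linarith

theorem real_inner_le_norm_sq_div_add {u v : E} {c : ℝ} (hc : 0 < c) :
    ⟪u, v⟫_ℝ ≤ ‖u‖ ^ 2 / (2 * c) + c / 2 * ‖v‖ ^ 2 := by
  have h : 0 ≤ ‖u - c • v‖ ^ 2 := sq_nonneg _
  rw [norm_sub_sq_real, inner_smul_right, norm_smul, Real.norm_of_nonneg hc.le] at h
  rw [div_add' _ _ _ (by positivity), le_div_iff₀ (by positivity)]
  nlinarith

end Prox

theorem sum_range_mul_sub_succ_le {a d : ℕ → ℝ} (ha : ∀ t, a (t + 1) ≤ a t) (hd : ∀ t, 0 ≤ d t)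
    (T : ℕ) : ∑ t ∈ range T, a t * (d t - d (t + 1)) ≤ a 0 * d 0 - a (T - 1) * d T := by
  induction T with
  | zero => simp
  | succ T ih =>
    rw [sum_range_succ, Nat.add_sub_cancel]
    have : a T * d T ≤ a (T - 1) * d T := by
      rcases T with _ | T
      · rfl
      · exact mul_le_mul_of_nonneg_right (ha T) (hd _)
    linarith

theorem sum_range_telescope_of_mul_succ_eq {γ θ E : ℕ → ℝ} (hγθ : ∀ t, γ (t + 1) * θ (t + 1) = γ t)
    (hE : E 0 = 0) (T : ℕ) :
    ∑ t ∈ range T, (γ t * E (t + 1) - γ t * θ t * E t) = γ (T - 1) * E T := by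
  induction T with
  | zero => simp [hE]
  | succ T ih =>
    rw [sum_range_succ, ih, Nat.add_sub_cancel]
    rcases T with _ | T
    · simp [hE]
    · rw [Nat.add_sub_cancel, hγθ]; ring

theorem opconex_step_le_of_three_point {E V : Type*} [NormedAddCommGroup E] [InnerProductSpace ℝ E]
    [NormedAddCommGroup V] [InnerProductSpace ℝ V] {θ η τ r : ℝ} {z x₀ x₁ F₀ F₁ Fm G : E}
    {l μ₀ μ₁ ℓm ℓ₀ ℓ₁ : V}
    (hprimal : ⟪(1 + θ) • F₀ - θ • Fm + G, x₁ - z⟫_ℝ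
      ≤ η / 2 * (‖z - x₀‖ ^ 2 - ‖x₁ - x₀‖ ^ 2 - ‖z - x₁‖ ^ 2))
    (hdual : ⟪-((1 + θ) • ℓ₀ - θ • ℓm), μ₁ - l⟫_ℝ
      ≤ τ / 2 * (‖l - μ₀‖ ^ 2 - ‖μ₁ - μ₀‖ ^ 2 - ‖l - μ₁‖ ^ 2))
    (hlin : ⟪μ₁, ℓ₁⟫_ℝ - r ≤ ⟪G, x₁ - z⟫_ℝ) :
    ⟪F₁, x₁ - z⟫_ℝ + ⟪l, ℓ₁⟫_ℝ - r
      ≤ (⟪F₁ - F₀, x₁ - z⟫_ℝ + ⟪l - μ₁, ℓ₁ - ℓ₀⟫_ℝ)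
        - θ * (⟪F₀ - Fm, x₀ - z⟫_ℝ + ⟪l - μ₀, ℓ₀ - ℓm⟫_ℝ)
        + θ * ⟪F₀ - Fm, x₀ - x₁⟫_ℝ + θ * ⟪ℓ₀ - ℓm, μ₁ - μ₀⟫_ℝ
        + η / 2 * (‖z - x₀‖ ^ 2 - ‖x₁ - x₀‖ ^ 2 - ‖z - x₁‖ ^ 2)
        + τ / 2 * (‖l - μ₀‖ ^ 2 - ‖μ₁ - μ₀‖ ^ 2 - ‖l - μ₁‖ ^ 2) := by
  simp only [inner_add_left, inner_sub_left, inner_neg_left, inner_smul_left, inner_sub_right,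
    RCLike.conj_to_real, real_inner_comm ℓ₀, real_inner_comm ℓm] at hprimal hdual hlin ⊢
  linarith

section Coordinates

variable {k : ℕ}

theorem real_inner_eq_sum_mul (u v : Euc k) : ⟪u, v⟫_ℝ = ∑ j, u j * v j := by
  simp [PiLp.inner_apply, mul_comm]

theorem inner_le_inner_of_nonneg {u v w : Euc k} (hu : ∀ j, 0 ≤ u j) (h : ∀ j, v j ≤ w j) :
    ⟪u, v⟫_ℝ ≤ ⟪u, w⟫_ℝ := by
  simp only [real_inner_eq_sum_mul]
  exact sum_le_sum fun j _ => mul_le_mul_of_nonneg_left (h j) (hu j)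

theorem convex_setOf_forall_nonneg : Convex ℝ {v : Euc k | ∀ j, 0 ≤ v j} := by
  intro p hp q hq a b ha hb _ j
  exact add_nonneg (mul_nonneg ha (hp j)) (mul_nonneg hb (hq j))

theorem posPart_apply_nonneg (v : Euc k) (j : Fin k) : 0 ≤ posPart v j := le_max_right _ _

theorem le_posPart_apply (v : Euc k) (j : Fin k) : v j ≤ posPart v j := le_max_left _ _

theorem real_inner_posPart_self (v : Euc k) : ⟪posPart v, v⟫_ℝ = ‖posPart v‖ ^ 2 := by
  rw [← real_inner_self_eq_norm_sq, real_inner_eq_sum_mul, real_inner_eq_sum_mul]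
  refine sum_congr rfl fun j _ => ?_
  change max (v j) 0 * v j = max (v j) 0 * max (v j) 0
  rcases le_total (v j) 0 with h | h <;> simp [h]

theorem exists_nonneg_norm_le_inner_eq (v : Euc k) {a : ℝ} (ha : 0 ≤ a) :
    ∃ l : Euc k, (∀ j, 0 ≤ l j) ∧ ‖l‖ ≤ a ∧ ⟪l, v⟫_ℝ = a * ‖posPart v‖ := by
  -- if `posPart v = 0`, then `a / 0 = 0` makes this `l = 0`, which also works
  refine ⟨(a / ‖posPart v‖) • posPart v, fun j => ?_, ?_, ?_⟩
  · exact mul_nonneg (div_nonneg ha (norm_nonneg _)) (posPart_apply_nonneg v j)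
  · rw [norm_smul, Real.norm_of_nonneg (div_nonneg ha (norm_nonneg _))]
    rcases eq_or_ne ‖posPart v‖ 0 with h | h
    · simp [h, ha]
    · rw [div_mul_cancel₀ _ h]
  · rw [real_inner_smul_left, real_inner_posPart_self]
    rcases eq_or_ne ‖posPart v‖ 0 with h | h
    · simp [h]
    · field_simp

theorem inner_eq_zero_and_nonpos_of_forall_inner_le {μ v : Euc k} (hμ : ∀ j, 0 ≤ μ j)
    (hmax : ∀ μ' : Euc k, (∀ j, 0 ≤ μ' j) → ⟪μ', v⟫_ℝ ≤ ⟪μ, v⟫_ℝ) :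
    ⟪μ, v⟫_ℝ = 0 ∧ ∀ j, v j ≤ 0 := by
  have hzero : ⟪μ, v⟫_ℝ = 0 := by
    have h0 := hmax 0 fun _ => le_rfl
    have h2 := hmax ((2 : ℝ) • μ) fun j => mul_nonneg zero_le_two (hμ j)
    rw [inner_zero_left] at h0
    rw [real_inner_smul_left] at h2
    linarith
  refine ⟨hzero, fun j => ?_⟩
  have h := hmax (EuclideanSpace.single j 1) fun i => by
    by_cases hij : i = j <;> simp [hij]
  rwa [EuclideanSpace.inner_single_left, hzero, map_one, one_mul] at h

end Coordinates

theorem neg_mul_norm_posPart_le_of_saddle {n m : ℕ} {X : Set (Euc n)} {g : Euc n → Euc m}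
    {c xstar : Euc n} {lamstar : Euc m} (hlamstar : ∀ j, 0 ≤ lamstar j)
    (hsaddle₁ : ∀ x ∈ X, ⟪c, xstar⟫_ℝ + ⟪lamstar, g xstar⟫_ℝ ≤ ⟪c, x⟫_ℝ + ⟪lamstar, g x⟫_ℝ)
    (hsaddle₂ : ∀ lam' : Euc m, (∀ j, 0 ≤ lam' j) → ⟪lam', g xstar⟫_ℝ ≤ ⟪lamstar, g xstar⟫_ℝ)
    {y : Euc n} (hy : y ∈ X) :
    -(‖lamstar‖ * ‖posPart (g y)‖) ≤ ⟪c, y - xstar⟫_ℝ := by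
  have hcompl := (inner_eq_zero_and_nonpos_of_forall_inner_le hlamstar hsaddle₂).1
  have hpos : ⟪lamstar, g y⟫_ℝ ≤ ‖lamstar‖ * ‖posPart (g y)‖ :=
    (inner_le_inner_of_nonneg hlamstar (le_posPart_apply _)).trans (real_inner_le_norm _ _)
  have := hsaddle₁ y hy
  rw [inner_sub_right]
  linarith

section Gradient

variable {m : ℕ} {E : Type*} [NormedAddCommGroup E] [InnerProductSpace ℝ E]

theorem inner_gradMul (G : Fin m → E) (μ : Euc m) (d : E) :
    ⟪gradMul G μ, d⟫_ℝ = ⟪μ, gradT G d⟫_ℝ := by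
  rw [real_inner_eq_sum_mul, gradMul, sum_inner]
  exact sum_congr rfl fun j _ => real_inner_smul_left _ _ _

theorem inner_add_inner_gradMul_le {G : Fin m → E} {d : E} {a b μ : Euc m}
    (hμ : ∀ j, 0 ≤ μ j) (h : ∀ j, a j + ⟪G j, d⟫_ℝ ≤ b j) :
    ⟪μ, a⟫_ℝ + ⟪gradMul G μ, d⟫_ℝ ≤ ⟪μ, b⟫_ℝ := by
  rw [inner_gradMul, ← inner_add_right]
  exact inner_le_inner_of_nonneg hμ h

end Gradient

section WeightedAverage

variable {ι E : Type*} [NormedAddCommGroup E] [InnerProductSpace ℝ E] {s : Finset ι}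
  {w : ι → ℝ} {y : ι → E} {xb : E}

theorem sum_mul_inner_sub_eq (hxb : ∑ i ∈ s, w i • y i = (∑ i ∈ s, w i) • xb) (c z : E) :
    ∑ i ∈ s, w i * ⟪c, y i - z⟫_ℝ = (∑ i ∈ s, w i) * ⟪c, xb - z⟫_ℝ := by
  calc ∑ i ∈ s, w i * ⟪c, y i - z⟫_ℝ = ⟪c, ∑ i ∈ s, w i • y i⟫_ℝ - (∑ i ∈ s, w i) * ⟪c, z⟫_ℝ := by
        simp only [inner_sum, inner_sub_right, real_inner_smul_right, mul_sub, sum_sub_distrib,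
          sum_mul]
    _ = (∑ i ∈ s, w i) * ⟪c, xb - z⟫_ℝ := by
        rw [hxb, real_inner_smul_right, inner_sub_right, mul_sub]

theorem sum_mul_le_of_subgradient {f : E → ℝ} {G : E} (hw : ∀ i ∈ s, 0 ≤ w i)
    (hxb : ∑ i ∈ s, w i • y i = (∑ i ∈ s, w i) • xb)
    (hsub : ∀ i ∈ s, f xb + ⟪G, y i - xb⟫_ℝ ≤ f (y i)) :
    (∑ i ∈ s, w i) * f xb ≤ ∑ i ∈ s, w i * f (y i) := by
  have h := sum_le_sum fun i hi => mul_le_mul_of_nonneg_left (hsub i hi) (hw i hi)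
  simpa only [mul_add, sum_add_distrib, sum_mul_inner_sub_eq hxb, sub_self, inner_zero_right,
    mul_zero, add_zero, ← sum_mul] using h

end WeightedAverage

section OpConExRun

variable {n m : ℕ}

/-- `xm` and `ellm` are the lagged sequences `x^{t-1}` and `ℓ_g(x^{t-1})`, and each argmin of the
method is recorded by its minimality inequality. -/
structure IsOpConExRun (X : Set (Euc n)) (F : Euc n → Euc n) (g : Euc n → Euc m)
    (Gg : Euc n → Fin m → Euc n) (η τ θ : ℕ → ℝ) (x xm : ℕ → Euc n)
    (lam ell ellm : ℕ → Euc m) : Prop where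
  mem : ∀ t, x t ∈ X
  prev_zero : xm 0 = x 0
  prev_succ : ∀ t, xm (t + 1) = x t
  lam_zero : lam 0 = 0
  lin_zero : ell 0 = g (x 0)
  lin_succ : ∀ t, ell (t + 1) = g (x t) + gradT (Gg (x t)) (x (t + 1) - x t)
  linPrev_zero : ellm 0 = g (x 0)
  linPrev_succ : ∀ t, ellm (t + 1) = ell t
  lam_nonneg : ∀ t, ∀ j, 0 ≤ lam (t + 1) j
  lam_isMin : ∀ t, ∀ lam' : Euc m, (∀ j, 0 ≤ lam' j) →
    ⟪-((1 + θ t) • ell t - θ t • ellm t), lam (t + 1)⟫_ℝ + τ t / 2 * ‖lam (t + 1) - lam t‖ ^ 2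
      ≤ ⟪-((1 + θ t) • ell t - θ t • ellm t), lam'⟫_ℝ + τ t / 2 * ‖lam' - lam t‖ ^ 2
  x_isMin : ∀ t, ∀ y ∈ X,
    ⟪(1 + θ t) • F (x t) - θ t • F (xm t) + gradMul (Gg (x t)) (lam (t + 1)), x (t + 1)⟫_ℝ
        + η t / 2 * ‖x (t + 1) - x t‖ ^ 2
      ≤ ⟪(1 + θ t) • F (x t) - θ t • F (xm t) + gradMul (Gg (x t)) (lam (t + 1)), y⟫_ℝ
        + η t / 2 * ‖y - x t‖ ^ 2

structure OpConExStepSizes (γ η τ θ : ℕ → ℝ) : Prop where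
  γ_pos : ∀ t, 0 < γ t
  η_pos : ∀ t, 0 < η t
  τ_pos : ∀ t, 0 < τ t
  γη_succ_le : ∀ t, γ (t + 1) * η (t + 1) ≤ γ t * η t
  γτ_succ_le : ∀ t, γ (t + 1) * τ (t + 1) ≤ γ t * τ t
  γθ_succ : ∀ t, γ (t + 1) * θ (t + 1) = γ t

def opconexCoupling (F : Euc n → Euc n) (x xm : ℕ → Euc n) (lam ell ellm : ℕ → Euc m)
    (z : Euc n) (l : Euc m) (t : ℕ) : ℝ :=
  ⟪F (x t) - F (xm t), x t - z⟫_ℝ + ⟪l - lam t, ell t - ellm t⟫_ℝ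

variable {X : Set (Euc n)} {F : Euc n → Euc n} {g : Euc n → Euc m}
  {Gg : Euc n → Fin m → Euc n} {γ η τ θ : ℕ → ℝ} {x xm : ℕ → Euc n} {lam ell ellm : ℕ → Euc m}

theorem opconexCoupling_le {z : Euc n} {l : Euc m} {t : ℕ} {a b : ℝ} (ha : 0 < a) (hb : 0 < b) :
    opconexCoupling F x xm lam ell ellm z l t
      ≤ ‖F (x t) - F (xm t)‖ ^ 2 / (2 * a) + a / 2 * ‖z - x t‖ ^ 2
        + (‖ell t - ellm t‖ ^ 2 / (2 * b) + b / 2 * ‖l - lam t‖ ^ 2) := by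
  unfold opconexCoupling
  rw [real_inner_comm (ell t - ellm t), ← norm_neg (z - x t), neg_sub]
  exact add_le_add (real_inner_le_norm_sq_div_add ha) (real_inner_le_norm_sq_div_add hb)

theorem opconexMT_eq_add (Lg Hg : ℝ) (T : ℕ) (a : ℝ) :
    opconexMT γ η τ θ Lg Hg F x xm lam ell ellm T a
      = opconexMT γ η τ θ Lg Hg F x xm lam ell ellm T 0
        + a * ∑ t ∈ range T, γ t * (Lg / 2 * ‖x (t + 1) - x t‖ ^ 2 + Hg * ‖x (t + 1) - x t‖) := by
  unfold opconexMT
  rw [add_right_comm _ _ (a * _), add_right_comm _ _ (a * _), mul_sum, ← sum_add_distrib]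
  congr 2
  exact sum_congr rfl fun t _ => by ring

variable (hrun : IsOpConExRun X F g Gg η τ θ x xm lam ell ellm) (hXconv : Convex ℝ X)
  (hgconv : ∀ x ∈ X, ∀ y ∈ X, ∀ j, g x j + ⟪Gg x j, y - x⟫_ℝ ≤ g y j)
  (hss : OpConExStepSizes γ η τ θ)

include hrun hXconv hgconv in
theorem IsOpConExRun.step_le (t : ℕ) {z : Euc n} (hz : z ∈ X) {l : Euc m} (hl : ∀ j, 0 ≤ l j) :
    ⟪F (x (t + 1)), x (t + 1) - z⟫_ℝ + ⟪l, ell (t + 1)⟫_ℝ - ⟪lam (t + 1), g z⟫_ℝ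
      ≤ opconexCoupling F x xm lam ell ellm z l (t + 1)
        - θ t * opconexCoupling F x xm lam ell ellm z l t
        + θ t * ⟪F (x t) - F (xm t), x t - x (t + 1)⟫_ℝ
        + θ t * ⟪ell t - ellm t, lam (t + 1) - lam t⟫_ℝ
        + η t / 2 * (‖z - x t‖ ^ 2 - ‖x (t + 1) - x t‖ ^ 2 - ‖z - x (t + 1)‖ ^ 2)
        + τ t / 2 * (‖l - lam t‖ ^ 2 - ‖lam (t + 1) - lam t‖ ^ 2 - ‖l - lam (t + 1)‖ ^ 2) := by
  have hprimal := inner_sub_le_of_prox_min hXconv (hrun.mem (t + 1)) (hrun.x_isMin t) hz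
  have hdual := inner_sub_le_of_prox_min convex_setOf_forall_nonneg (hrun.lam_nonneg t)
    (hrun.lam_isMin t) hl
  have hsub := inner_add_inner_gradMul_le (d := z - x t) (hrun.lam_nonneg t)
    (hgconv (x t) (hrun.mem t) z hz)
  have hlin : ⟪lam (t + 1), ell (t + 1)⟫_ℝ - ⟪lam (t + 1), g z⟫_ℝ
      ≤ ⟪gradMul (Gg (x t)) (lam (t + 1)), x (t + 1) - z⟫_ℝ := by
    rw [hrun.lin_succ, inner_add_right, ← inner_gradMul, ← sub_sub_sub_cancel_right _ z (x t),
      inner_sub_right _ (x (t + 1) - x t)]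
    linarith
  unfold opconexCoupling
  rw [hrun.prev_succ, hrun.linPrev_succ]
  exact opconex_step_le_of_three_point hprimal hdual hlin

include hrun hXconv hgconv hss in
theorem IsOpConExRun.sum_lagrangian_le (Lg Hg : ℝ) (T : ℕ) {z : Euc n} (hz : z ∈ X)
    {l : Euc m} (hl : ∀ j, 0 ≤ l j) :
    ∑ t ∈ range T, γ t *
        (⟪F (x (t + 1)), x (t + 1) - z⟫_ℝ + ⟪l, ell (t + 1)⟫_ℝ - ⟪lam (t + 1), g z⟫_ℝ)
      ≤ γ 0 * η 0 / 2 * ‖z - x 0‖ ^ 2 + γ 0 * τ 0 / 2 * ‖l‖ ^ 2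
        + opconexMT γ η τ θ Lg Hg F x xm lam ell ellm T 0 := by
  set E := opconexCoupling F x xm lam ell ellm z l
  have hE0 : E 0 = 0 := by
    simp [E, opconexCoupling, hrun.prev_zero, hrun.lin_zero, hrun.linPrev_zero]
  have hstep : ∀ t ∈ range T, γ t *
      (⟪F (x (t + 1)), x (t + 1) - z⟫_ℝ + ⟪l, ell (t + 1)⟫_ℝ - ⟪lam (t + 1), g z⟫_ℝ)
      ≤ (γ t * E (t + 1) - γ t * θ t * E t)
        -- the summand of `opconexMT … 0`, spelled out so that it matches after unfolding
        + (γ t * θ t * ⟪F (x t) - F (xm t), x t - x (t + 1)⟫_ℝ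
          + γ t * θ t * ⟪ell t - ellm t, lam (t + 1) - lam t⟫_ℝ
          - γ t * (η t - Lg * 0) / 2 * ‖x (t + 1) - x t‖ ^ 2
          - γ t * τ t / 2 * ‖lam t - lam (t + 1)‖ ^ 2
          + 0 * Hg * γ t * ‖x (t + 1) - x t‖)
        + γ t * η t / 2 * (‖z - x t‖ ^ 2 - ‖z - x (t + 1)‖ ^ 2)
        + γ t * τ t / 2 * (‖l - lam t‖ ^ 2 - ‖l - lam (t + 1)‖ ^ 2) := by
    intro t _
    have h := mul_le_mul_of_nonneg_left (hrun.step_le hXconv hgconv t hz hl) (hss.γ_pos t).le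
    rw [norm_sub_rev (lam t)]
    linarith
  have hsum := sum_le_sum hstep
  rw [sum_add_distrib, sum_add_distrib, sum_add_distrib] at hsum
  have hcoupling := sum_range_telescope_of_mul_succ_eq hss.γθ_succ hE0 T
  have hprimal := sum_range_mul_sub_succ_le (a := fun t => γ t * η t / 2)
    (fun t => by linarith [hss.γη_succ_le t]) (fun t => sq_nonneg ‖z - x t‖) T
  have hdual := sum_range_mul_sub_succ_le (a := fun t => γ t * τ t / 2)
    (fun t => by linarith [hss.γτ_succ_le t]) (fun t => sq_nonneg ‖l - lam t‖) T
  rw [hrun.lam_zero, sub_zero] at hdual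
  have hlast : γ (T - 1) * E T ≤ γ (T - 1) / (2 * η (T - 1)) * ‖F (x T) - F (xm T)‖ ^ 2
      + γ (T - 1) * η (T - 1) / 2 * ‖z - x T‖ ^ 2
      + γ (T - 1) / (2 * τ (T - 1)) * ‖ell T - ellm T‖ ^ 2
      + γ (T - 1) * τ (T - 1) / 2 * ‖l - lam T‖ ^ 2 :=
    (mul_le_mul_of_nonneg_left (opconexCoupling_le (hss.η_pos (T - 1)) (hss.τ_pos (T - 1)))
      (hss.γ_pos (T - 1)).le).trans_eq (by ring)
  unfold opconexMT
  linarith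

include hrun hXconv hgconv hss in
theorem IsOpConExRun.gap_le
    (hFmono : ∀ x₁ ∈ X, ∀ x₂ ∈ X, 0 ≤ ⟪F x₁ - F x₂, x₁ - x₂⟫_ℝ) (Lg Hg : ℝ) {T : ℕ} (hT : 1 ≤ T)
    {z : Euc n} (hz : z ∈ X) (hgz : ∀ j, g z j ≤ 0) {l : Euc m} (hl : ∀ j, 0 ≤ l j) :
    (∑ t ∈ range T, γ t) *
          ⟪F z, (∑ t ∈ range T, γ t)⁻¹ • (∑ t ∈ range T, γ t • x (t + 1)) - z⟫_ℝ
        + ∑ t ∈ range T, γ t * ⟪l, ell (t + 1)⟫_ℝ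
      ≤ γ 0 * η 0 / 2 * ‖z - x 0‖ ^ 2 + γ 0 * τ 0 / 2 * ‖l‖ ^ 2
        + opconexMT γ η τ θ Lg Hg F x xm lam ell ellm T 0 := by
  have hΓ : (∑ t ∈ range T, γ t) ≠ 0 :=
    (sum_pos (fun t _ => hss.γ_pos t) (nonempty_range_iff.mpr (by omega))).ne'
  rw [← sum_mul_inner_sub_eq (smul_inv_smul₀ hΓ _).symm, ← sum_add_distrib]
  refine (sum_le_sum fun t _ => ?_).trans (hrun.sum_lagrangian_le hXconv hgconv hss Lg Hg T hz hl)
  rw [← mul_add]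
  refine mul_le_mul_of_nonneg_left ?_ (hss.γ_pos t).le
  have hmono := hFmono _ (hrun.mem (t + 1)) _ hz
  have hcompl : ⟪lam (t + 1), g z⟫_ℝ ≤ 0 := by
    simpa using inner_le_inner_of_nonneg (w := 0) (hrun.lam_nonneg t) hgz
  rw [inner_sub_left] at hmono
  linarith

include hrun hss in
theorem IsOpConExRun.sum_inner_le_sum_inner_lin_add {Lg Hg : ℝ}
    (hgsmooth : ∀ x₁ ∈ X, ∀ x₂ ∈ X,
      ‖g x₁ - g x₂ - gradT (Gg x₂) (x₁ - x₂)‖ ≤ Lg / 2 * ‖x₁ - x₂‖ ^ 2 + Hg * ‖x₁ - x₂‖)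
    (T : ℕ) {l : Euc m} {a : ℝ} (hla : ‖l‖ ≤ a) :
    ∑ t ∈ range T, γ t * ⟪l, g (x (t + 1))⟫_ℝ
      ≤ ∑ t ∈ range T, γ t * ⟪l, ell (t + 1)⟫_ℝ
        + a * ∑ t ∈ range T, γ t * (Lg / 2 * ‖x (t + 1) - x t‖ ^ 2 + Hg * ‖x (t + 1) - x t‖) := by
  rw [mul_sum, ← sum_add_distrib]
  refine sum_le_sum fun t _ => ?_
  have herr : ⟪l, g (x (t + 1)) - ell (t + 1)⟫_ℝ
      ≤ a * (Lg / 2 * ‖x (t + 1) - x t‖ ^ 2 + Hg * ‖x (t + 1) - x t‖) := by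
    refine (real_inner_le_norm _ _).trans
      (mul_le_mul hla ?_ (norm_nonneg _) ((norm_nonneg l).trans hla))
    rw [hrun.lin_succ, sub_add_eq_sub_sub]
    exact hgsmooth _ (hrun.mem (t + 1)) _ (hrun.mem t)
  rw [inner_sub_right] at herr
  nlinarith [hss.γ_pos t]

include hrun hXconv hgconv hss in
theorem IsOpConExRun.infeasibility_le
    (hFmono : ∀ x₁ ∈ X, ∀ x₂ ∈ X, 0 ≤ ⟪F x₁ - F x₂, x₁ - x₂⟫_ℝ) {Lg Hg : ℝ}
    (hgsmooth : ∀ x₁ ∈ X, ∀ x₂ ∈ X,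
      ‖g x₁ - g x₂ - gradT (Gg x₂) (x₁ - x₂)‖ ≤ Lg / 2 * ‖x₁ - x₂‖ ^ 2 + Hg * ‖x₁ - x₂‖)
    {xstar : Euc n} {lamstar : Euc m} (hxstar : xstar ∈ X) (hlamstar : ∀ j, 0 ≤ lamstar j)
    (hsaddle₁ : ∀ x ∈ X,
      ⟪F xstar, xstar⟫_ℝ + ⟪lamstar, g xstar⟫_ℝ ≤ ⟪F xstar, x⟫_ℝ + ⟪lamstar, g x⟫_ℝ)
    (hsaddle₂ : ∀ lam' : Euc m, (∀ j, 0 ≤ lam' j) →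
      ⟪lam', g xstar⟫_ℝ ≤ ⟪lamstar, g xstar⟫_ℝ)
    {T : ℕ} (hT : 1 ≤ T) :
    (∑ t ∈ range T, γ t) *
          ‖posPart (g ((∑ t ∈ range T, γ t)⁻¹ • (∑ t ∈ range T, γ t • x (t + 1))))‖
        ≤ γ 0 * η 0 / 2 * ‖xstar - x 0‖ ^ 2 + γ 0 * τ 0 / 2 * (‖lamstar‖ + 1) ^ 2
          + opconexMT γ η τ θ Lg Hg F x xm lam ell ellm T (‖lamstar‖ + 1) := by
  set Γ := ∑ t ∈ range T, γ t
  set xb := Γ⁻¹ • ∑ t ∈ range T, γ t • x (t + 1)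
  set a := ‖lamstar‖ + 1 with ha_def
  have hΓ : 0 < Γ := sum_pos (fun t _ => hss.γ_pos t) (nonempty_range_iff.mpr (by omega))
  have hxb : ∑ t ∈ range T, γ t • x (t + 1) = Γ • xb := (smul_inv_smul₀ hΓ.ne' _).symm
  have hxbX : xb ∈ X :=
    hXconv.centerMass_mem (fun t _ => (hss.γ_pos t).le) hΓ (fun t _ => hrun.mem (t + 1))
  obtain ⟨l, hl, hla, hlv⟩ := exists_nonneg_norm_le_inner_eq (g xb) (by positivity : 0 ≤ a)
  have hgap : Γ * ⟪F xstar, xb - xstar⟫_ℝ + ∑ t ∈ range T, γ t * ⟪l, ell (t + 1)⟫_ℝ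
      ≤ γ 0 * η 0 / 2 * ‖xstar - x 0‖ ^ 2 + γ 0 * τ 0 / 2 * ‖l‖ ^ 2
        + opconexMT γ η τ θ Lg Hg F x xm lam ell ellm T 0 :=
    hrun.gap_le hXconv hgconv hss hFmono Lg Hg hT hxstar
      (inner_eq_zero_and_nonpos_of_forall_inner_le hlamstar hsaddle₂).2 hl
  have hjensen : Γ * ⟪l, g xb⟫_ℝ ≤ ∑ t ∈ range T, γ t * ⟪l, g (x (t + 1))⟫_ℝ :=
    sum_mul_le_of_subgradient (f := fun y => ⟪l, g y⟫_ℝ) (fun t _ => (hss.γ_pos t).le) hxb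
      fun t _ => inner_add_inner_gradMul_le hl (hgconv xb hxbX _ (hrun.mem (t + 1)))
  have hlin := hrun.sum_inner_le_sum_inner_lin_add hss hgsmooth T hla
  have hsaddle := mul_le_mul_of_nonneg_left
    (neg_mul_norm_posPart_le_of_saddle hlamstar hsaddle₁ hsaddle₂ hxbX) hΓ.le
  have hl2 : γ 0 * τ 0 / 2 * ‖l‖ ^ 2 ≤ γ 0 * τ 0 / 2 * a ^ 2 :=
    mul_le_mul_of_nonneg_left (pow_le_pow_left₀ (norm_nonneg l) hla 2)
      (by have := hss.γ_pos 0; have := hss.τ_pos 0; positivity)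
  have hsplit : Γ * (a * ‖posPart (g xb)‖)
      = Γ * (‖lamstar‖ * ‖posPart (g xb)‖) + Γ * ‖posPart (g xb)‖ := by
    rw [ha_def]; ring
  rw [hlv] at hjensen
  rw [opconexMT_eq_add]
  linarith

end OpConExRun

theorem opconex_working_bound_general
    {n m : ℕ}
    (X : Set (Euc n)) (hXconv : Convex ℝ X)
    (F : Euc n → Euc n)
    (hFmono : ∀ x₁ ∈ X, ∀ x₂ ∈ X, 0 ≤ ⟪F x₁ - F x₂, x₁ - x₂⟫_ℝ)
    (g : Euc n → Euc m) (Gg : Euc n → Fin m → Euc n)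
    (Lg Hg : ℝ)
    (hgconv : ∀ x ∈ X, ∀ y ∈ X, ∀ j, g x j + ⟪Gg x j, y - x⟫_ℝ ≤ g y j)
    (hgsmooth : ∀ x₁ ∈ X, ∀ x₂ ∈ X,
      ‖g x₁ - g x₂ - gradT (Gg x₂) (x₁ - x₂)‖ ≤ Lg / 2 * ‖x₁ - x₂‖ ^ 2 + Hg * ‖x₁ - x₂‖)
    (xstar : Euc n) (lamstar : Euc m) (hxstar : xstar ∈ X) (hlamstar : ∀ j, 0 ≤ lamstar j)
    (hsaddle₁ : ∀ x ∈ X,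
      ⟪F xstar, xstar⟫_ℝ + ⟪lamstar, g xstar⟫_ℝ ≤ ⟪F xstar, x⟫_ℝ + ⟪lamstar, g x⟫_ℝ)
    (hsaddle₂ : ∀ lam' : Euc m, (∀ j, 0 ≤ lam' j) →
      ⟪lam', g xstar⟫_ℝ ≤ ⟪lamstar, g xstar⟫_ℝ)
    (T : ℕ) (hT : 1 ≤ T)
    (γ η τ θ : ℕ → ℝ)
    (hγ : ∀ t, 0 < γ t) (hη : ∀ t, 0 < η t) (hτ : ∀ t, 0 < τ t)
    (hC₁ : ∀ t, γ (t + 1) * η (t + 1) ≤ γ t * η t)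
    (hC₂ : ∀ t, γ (t + 1) * τ (t + 1) ≤ γ t * τ t)
    (hC₃ : ∀ t, γ (t + 1) * θ (t + 1) = γ t)
    (x xm : ℕ → Euc n) (lam : ℕ → Euc m) (ell ellm : ℕ → Euc m)
    (hx0 : x 0 ∈ X) (hxm0 : xm 0 = x 0) (hxm : ∀ t, xm (t + 1) = x t)
    (hlam0 : lam 0 = 0)
    (hell0 : ell 0 = g (x 0))
    (hell : ∀ t, ell (t + 1) = g (x t) + gradT (Gg (x t)) (x (t + 1) - x t))
    (hellm0 : ellm 0 = g (x 0)) (hellm : ∀ t, ellm (t + 1) = ell t)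
    (hlamPos : ∀ t, ∀ j, 0 ≤ lam (t + 1) j)
    (hlamMin : ∀ t, ∀ lam' : Euc m, (∀ j, 0 ≤ lam' j) →
      ⟪-((1 + θ t) • ell t - θ t • ellm t), lam (t + 1)⟫_ℝ
          + τ t / 2 * ‖lam (t + 1) - lam t‖ ^ 2
        ≤ ⟪-((1 + θ t) • ell t - θ t • ellm t), lam'⟫_ℝ
          + τ t / 2 * ‖lam' - lam t‖ ^ 2)
    (hxS : ∀ t, x (t + 1) ∈ X)
    (hxMin : ∀ t, ∀ y ∈ X,
      ⟪(1 + θ t) • F (x t) - θ t • F (xm t) + gradMul (Gg (x t)) (lam (t + 1)),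
          x (t + 1)⟫_ℝ + η t / 2 * ‖x (t + 1) - x t‖ ^ 2
        ≤ ⟪(1 + θ t) • F (x t) - θ t • F (xm t) + gradMul (Gg (x t)) (lam (t + 1)),
          y⟫_ℝ + η t / 2 * ‖y - x t‖ ^ 2) :
    (∀ z ∈ X, (∀ j, g z j ≤ 0) →
      (∑ t ∈ Finset.range T, γ t) *
          ⟪F z, (∑ t ∈ Finset.range T, γ t)⁻¹ • (∑ t ∈ Finset.range T, γ t • x (t + 1)) - z⟫_ℝ
        ≤ γ 0 * η 0 / 2 * ‖z - x 0‖ ^ 2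
          + opconexMT γ η τ θ Lg Hg F x xm lam ell ellm T 0)
    ∧ (∑ t ∈ Finset.range T, γ t) *
          ‖posPart (g ((∑ t ∈ Finset.range T, γ t)⁻¹ • (∑ t ∈ Finset.range T, γ t • x (t + 1))))‖
        ≤ γ 0 * η 0 / 2 * ‖xstar - x 0‖ ^ 2 + γ 0 * τ 0 / 2 * (‖lamstar‖ + 1) ^ 2
          + opconexMT γ η τ θ Lg Hg F x xm lam ell ellm T (‖lamstar‖ + 1) := by
  have hxX : ∀ t, x t ∈ X := by
    rintro (_ | t)
    exacts [hx0, hxS t]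
  have hrun : IsOpConExRun X F g Gg η τ θ x xm lam ell ellm :=
    ⟨hxX, hxm0, hxm, hlam0, hell0, hell, hellm0, hellm, hlamPos, hlamMin, hxMin⟩
  have hss : OpConExStepSizes γ η τ θ := ⟨hγ, hη, hτ, hC₁, hC₂, hC₃⟩
  refine ⟨fun z hz hgz => ?_, hrun.infeasibility_le hXconv hgconv hss hFmono hgsmooth hxstar
    hlamstar hsaddle₁ hsaddle₂ hT⟩
  simpa using hrun.gap_le hXconv hgconv hss hFmono Lg Hg hT hz hgz (l := 0) fun _ => le_rfl

/-- **Lemma 2.2 of the paper.** Working bound for the OpConEx method under the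
step-size condition (C). -/
theorem opconex_working_bound
    {n m : ℕ}
    (X : Set (Euc n)) (hXne : X.Nonempty) (hXcomp : IsCompact X) (hXconv : Convex ℝ X)
    (F : Euc n → Euc n) (L H : ℝ) (hL : 0 ≤ L) (hH : 0 ≤ H)
    (hFmono : ∀ x₁ ∈ X, ∀ x₂ ∈ X, 0 ≤ ⟪F x₁ - F x₂, x₁ - x₂⟫_ℝ)
    (hFlip : ∀ x₁ ∈ X, ∀ x₂ ∈ X, ‖F x₁ - F x₂‖ ≤ L * ‖x₁ - x₂‖ + H)
    (g : Euc n → Euc m) (Gg : Euc n → Fin m → Euc n)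
    (Mg Lg Hg : ℝ) (hMg : 0 ≤ Mg) (hLg : 0 ≤ Lg) (hHg : 0 ≤ Hg)
    (hgconv : ∀ x ∈ X, ∀ y ∈ X, ∀ j, g x j + ⟪Gg x j, y - x⟫_ℝ ≤ g y j)
    (hglip : ∀ x₁ ∈ X, ∀ x₂ ∈ X, ‖g x₁ - g x₂‖ ≤ Mg * ‖x₁ - x₂‖)
    (hGgbd : ∀ x ∈ X, ∀ μ : Euc m, ‖gradMul (Gg x) μ‖ ≤ Mg * ‖μ‖)
    (hgsmooth : ∀ x₁ ∈ X, ∀ x₂ ∈ X,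
      ‖g x₁ - g x₂ - gradT (Gg x₂) (x₁ - x₂)‖ ≤ Lg / 2 * ‖x₁ - x₂‖ ^ 2 + Hg * ‖x₁ - x₂‖)
    (hXtne : ∃ x ∈ X, ∀ j, g x j ≤ 0)
    (xstar : Euc n) (lamstar : Euc m) (hxstar : xstar ∈ X) (hlamstar : ∀ j, 0 ≤ lamstar j)
    (hsaddle₁ : ∀ x ∈ X,
      ⟪F xstar, xstar⟫_ℝ + ⟪lamstar, g xstar⟫_ℝ ≤ ⟪F xstar, x⟫_ℝ + ⟪lamstar, g x⟫_ℝ)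
    (hsaddle₂ : ∀ lam' : Euc m, (∀ j, 0 ≤ lam' j) →
      ⟪lam', g xstar⟫_ℝ ≤ ⟪lamstar, g xstar⟫_ℝ)
    (T : ℕ) (hT : 1 ≤ T)
    (γ η τ θ : ℕ → ℝ)
    (hγ : ∀ t, 0 < γ t) (hη : ∀ t, 0 < η t) (hτ : ∀ t, 0 < τ t) (hθ : ∀ t, 0 ≤ θ t)
    (hC₁ : ∀ t, γ (t + 1) * η (t + 1) ≤ γ t * η t)
    (hC₂ : ∀ t, γ (t + 1) * τ (t + 1) ≤ γ t * τ t)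
    (hC₃ : ∀ t, γ (t + 1) * θ (t + 1) = γ t)
    (x xm : ℕ → Euc n) (lam : ℕ → Euc m) (ell ellm : ℕ → Euc m)
    (hx0 : x 0 ∈ X) (hxm0 : xm 0 = x 0) (hxm : ∀ t, xm (t + 1) = x t)
    (hlam0 : lam 0 = 0)
    (hell0 : ell 0 = g (x 0))
    (hell : ∀ t, ell (t + 1) = g (x t) + gradT (Gg (x t)) (x (t + 1) - x t))
    (hellm0 : ellm 0 = g (x 0)) (hellm : ∀ t, ellm (t + 1) = ell t)
    (hlamPos : ∀ t, ∀ j, 0 ≤ lam (t + 1) j)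
    (hlamMin : ∀ t, ∀ lam' : Euc m, (∀ j, 0 ≤ lam' j) →
      ⟪-((1 + θ t) • ell t - θ t • ellm t), lam (t + 1)⟫_ℝ
          + τ t / 2 * ‖lam (t + 1) - lam t‖ ^ 2
        ≤ ⟪-((1 + θ t) • ell t - θ t • ellm t), lam'⟫_ℝ
          + τ t / 2 * ‖lam' - lam t‖ ^ 2)
    (hxS : ∀ t, x (t + 1) ∈ X)
    (hxMin : ∀ t, ∀ y ∈ X,
      ⟪(1 + θ t) • F (x t) - θ t • F (xm t) + gradMul (Gg (x t)) (lam (t + 1)),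
          x (t + 1)⟫_ℝ + η t / 2 * ‖x (t + 1) - x t‖ ^ 2
        ≤ ⟪(1 + θ t) • F (x t) - θ t • F (xm t) + gradMul (Gg (x t)) (lam (t + 1)),
          y⟫_ℝ + η t / 2 * ‖y - x t‖ ^ 2) :
    (∀ z ∈ X, (∀ j, g z j ≤ 0) →
      (∑ t ∈ Finset.range T, γ t) *
          ⟪F z, (∑ t ∈ Finset.range T, γ t)⁻¹ • (∑ t ∈ Finset.range T, γ t • x (t + 1)) - z⟫_ℝ
        ≤ γ 0 * η 0 / 2 * ‖z - x 0‖ ^ 2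
          + opconexMT γ η τ θ Lg Hg F x xm lam ell ellm T 0)
    ∧ (∑ t ∈ Finset.range T, γ t) *
          ‖posPart (g ((∑ t ∈ Finset.range T, γ t)⁻¹ • (∑ t ∈ Finset.range T, γ t • x (t + 1))))‖
        ≤ γ 0 * η 0 / 2 * ‖xstar - x 0‖ ^ 2 + γ 0 * τ 0 / 2 * (‖lamstar‖ + 1) ^ 2
          + opconexMT γ η τ θ Lg Hg F x xm lam ell ellm T (‖lamstar‖ + 1) :=
  opconex_working_bound_general X hXconv F hFmono g Gg Lg Hg hgconv hgsmooth xstar lamstar hxstar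
    hlamstar hsaddle₁ hsaddle₂ T hT γ η τ θ hγ hη hτ hC₁ hC₂ hC₃ x xm lam ell ellm hx0 hxm0 hxm
    hlam0 hell0 hell hellm0 hellm hlamPos hlamMin hxS hxMin

end
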